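/- arXiv:math/9802115 — 3 statements merged into one kernel-verified Lean document; each statement's English description precedes it below -/
import Mathlib

section
/- Let f and g be smooth functions of (x,y) satisfying (∂f/∂x)(∂g/∂y) − (∂f/∂y)(∂g/∂x) = 0 identically. Then the bivector on ℝ³ given by B = z, C = ∂f/∂x + z·∂g/∂x, D = ∂f/∂y + z·∂g/∂y (i.e. the brackets {x,y} = z, {y,z} = f_x + z g_x, {z,x} = f_y + z g_y) satisfies the Jacobi condition B(D_x − C_y) + C(B_y − D_z) + D(C_z − B_x) = 0, hence defines a Poisson structure on ℝ³. -/
noncomputable def pdx (F : ℝ × ℝ × ℝ → ℝ) (p : ℝ × ℝ × ℝ) : ℝ := fderiv ℝ F p (1, 0, 0)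
noncomputable def pdy (F : ℝ × ℝ × ℝ → ℝ) (p : ℝ × ℝ × ℝ) : ℝ := fderiv ℝ F p (0, 1, 0)
noncomputable def pdz (F : ℝ × ℝ × ℝ → ℝ) (p : ℝ × ℝ × ℝ) : ℝ := fderiv ℝ F p (0, 0, 1)

/-- The Jacobi expression `B(D_x−C_y) + C(B_y−D_z) + D(C_z−B_x)` of the bivector
`P = B ∂x∧∂y + C ∂y∧∂z + D ∂z∧∂x` on `ℝ³`. -/
noncomputable def jacobiExpr (B C D : ℝ × ℝ × ℝ → ℝ) (p : ℝ × ℝ × ℝ) : ℝ :=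
  B p * (pdx D p - pdy C p) + C p * (pdy B p - pdz D p) + D p * (pdz C p - pdx B p)


noncomputable def pdx2 (f : ℝ × ℝ → ℝ) (q : ℝ × ℝ) : ℝ := fderiv ℝ f q (1, 0)
noncomputable def pdy2 (f : ℝ × ℝ → ℝ) (q : ℝ × ℝ) : ℝ := fderiv ℝ f q (0, 1)

noncomputable def pr3 : (ℝ × ℝ × ℝ) →L[ℝ] (ℝ × ℝ) :=
  (ContinuousLinearMap.fst ℝ ℝ (ℝ × ℝ)).prod
    ((ContinuousLinearMap.fst ℝ ℝ ℝ).comp (ContinuousLinearMap.snd ℝ ℝ (ℝ × ℝ)))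

noncomputable def prz : (ℝ × ℝ × ℝ) →L[ℝ] ℝ :=
  (ContinuousLinearMap.snd ℝ ℝ ℝ).comp (ContinuousLinearMap.snd ℝ ℝ (ℝ × ℝ))

lemma key (h k : ℝ × ℝ → ℝ) (p : ℝ × ℝ × ℝ)
    (hh : DifferentiableAt ℝ h (p.1, p.2.1)) (hk : DifferentiableAt ℝ k (p.1, p.2.1))
    (v : ℝ × ℝ × ℝ) :
    fderiv ℝ (fun r : ℝ × ℝ × ℝ => h (r.1, r.2.1) + r.2.2 * k (r.1, r.2.1)) p v
      = fderiv ℝ h (p.1, p.2.1) (v.1, v.2.1)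
        + (v.2.2 * k (p.1, p.2.1) + p.2.2 * fderiv ℝ k (p.1, p.2.1) (v.1, v.2.1)) := by
  have hpr : HasFDerivAt (fun r : ℝ × ℝ × ℝ => (r.1, r.2.1)) pr3 p := pr3.hasFDerivAt
  have hprz : HasFDerivAt (fun r : ℝ × ℝ × ℝ => r.2.2) prz p := prz.hasFDerivAt
  have h1 : HasFDerivAt (fun r : ℝ × ℝ × ℝ => h (r.1, r.2.1))
      ((fderiv ℝ h (p.1, p.2.1)).comp pr3) p := hh.hasFDerivAt.comp p hpr
  have h2 : HasFDerivAt (fun r : ℝ × ℝ × ℝ => k (r.1, r.2.1))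
      ((fderiv ℝ k (p.1, p.2.1)).comp pr3) p := hk.hasFDerivAt.comp p hpr
  have h3 := hprz.mul h2
  have H : fderiv ℝ (fun r : ℝ × ℝ × ℝ => h (r.1, r.2.1) + r.2.2 * k (r.1, r.2.1)) p = _ := (h1.add h3).fderiv
  rw [H]
  simp [pr3, prz, ContinuousLinearMap.comp_apply, ContinuousLinearMap.smul_apply]
  ring

lemma fderiv_pd (f : ℝ × ℝ → ℝ) (hf : ContDiff ℝ 2 f) (q v w : ℝ × ℝ) :
    fderiv ℝ (fun r => fderiv ℝ f r w) q v = fderiv ℝ (fderiv ℝ f) q v w := by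
  have hd : DifferentiableAt ℝ (fderiv ℝ f) q := by
    have : ContDiff ℝ 1 (fderiv ℝ f) := hf.fderiv_right (by norm_num)
    exact this.differentiable one_ne_zero q
  have := (hd.hasFDerivAt.clm_apply (hasFDerivAt_const w q)).fderiv
  rw [this]
  simp

theorem stmt_3 (f g : ℝ × ℝ → ℝ) (hf : ContDiff ℝ (⊤ : ℕ∞) f) (hg : ContDiff ℝ (⊤ : ℕ∞) g)
    (hfg : ∀ q : ℝ × ℝ, pdx2 f q * pdy2 g q - pdy2 f q * pdx2 g q = 0) :
    ∀ p : ℝ × ℝ × ℝ,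
      jacobiExpr (fun q => q.2.2)
        (fun q => pdx2 f (q.1, q.2.1) + q.2.2 * pdx2 g (q.1, q.2.1))
        (fun q => pdy2 f (q.1, q.2.1) + q.2.2 * pdy2 g (q.1, q.2.1)) p = 0 := by
  intro p
  have hf2 : ContDiff ℝ 2 f := hf.of_le (WithTop.coe_le_coe.mpr le_top)
  have hg2 : ContDiff ℝ 2 g := hg.of_le (WithTop.coe_le_coe.mpr le_top)
  set q : ℝ × ℝ := (p.1, p.2.1) with hq
  have dfx : ∀ (h : ℝ × ℝ → ℝ), ContDiff ℝ (⊤ : ℕ∞) h → ∀ w : ℝ × ℝ,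
      DifferentiableAt ℝ (fun r => fderiv ℝ h r w) q := fun h hh w =>
    ((hh.fderiv_right (m := 1) (WithTop.coe_le_coe.mpr le_top)).clm_apply contDiff_const).differentiable one_ne_zero q
  have hB : ∀ v : ℝ × ℝ × ℝ, fderiv ℝ (fun r : ℝ × ℝ × ℝ => r.2.2) p v = v.2.2 := by
    intro v
    have : HasFDerivAt (fun r : ℝ × ℝ × ℝ => r.2.2) prz p := prz.hasFDerivAt
    rw [this.fderiv]; simp [prz]
  have kC := fun v => key (pdx2 f) (pdx2 g) p (dfx f hf _) (dfx g hg _) v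
  have kD := fun v => key (pdy2 f) (pdy2 g) p (dfx f hf _) (dfx g hg _) v
  have symf := (hf2.contDiffAt (x := q)).isSymmSndFDerivAt (by simp) ((1:ℝ),(0:ℝ)) ((0:ℝ),(1:ℝ))
  have symg := (hg2.contDiffAt (x := q)).isSymmSndFDerivAt (by simp) ((1:ℝ),(0:ℝ)) ((0:ℝ),(1:ℝ))
  have e1 : fderiv ℝ (pdy2 f) q (1, 0) = fderiv ℝ (pdx2 f) q (0, 1) := by
    unfold pdy2 pdx2
    rw [fderiv_pd f hf2, fderiv_pd f hf2, symf]
  have e2 : fderiv ℝ (pdy2 g) q (1, 0) = fderiv ℝ (pdx2 g) q (0, 1) := by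
    unfold pdy2 pdx2
    rw [fderiv_pd g hg2, fderiv_pd g hg2, symg]
  have hfg' := hfg q
  simp only [jacobiExpr, pdx, pdy, pdz, hB, kC, kD, hq]
  simp only [Prod.mk_zero_zero, map_zero, one_mul, zero_mul, ← hq]
  rw [e1, e2]
  linear_combination -hfg'
end

section
/- Let a, b, c, d be smooth functions of (x,y), and Q₁, Q₂ smooth functions of (x,y,z). If the bivector with brackets {x,y} = z, {y,z} = c(x,y) + z·a(x,y) + z²·Q₁(x,y,z), {z,x} = d(x,y) + z·b(x,y) + z²·Q₂(x,y,z) satisfies the Jacobi identity, then c(x,y)·b(x,y) = d(x,y)·a(x,y) for all (x,y). -/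
noncomputable def curl (B C D : ℝ × ℝ × ℝ → ℝ) (p : ℝ × ℝ × ℝ) : ℝ × ℝ × ℝ :=
  (pdy B p - pdz D p, pdz C p - pdx B p, pdx D p - pdy C p)

/-- Auxiliary: pdz of a function of the given shape at z = 0 equals a(x,y). -/
lemma pdz_shape (a c : ℝ × ℝ → ℝ) (Q : ℝ × ℝ × ℝ → ℝ)
    (ha : ContDiff ℝ (⊤ : ℕ∞) a) (hc : ContDiff ℝ (⊤ : ℕ∞) c) (hQ : ContDiff ℝ (⊤ : ℕ∞) Q) (x y : ℝ) :
    pdz (fun q : ℝ × ℝ × ℝ => c (q.1, q.2.1) + q.2.2 * a (q.1, q.2.1) + q.2.2 ^ 2 * Q q)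
      (x, y, 0) = a (x, y) := by
  set F : ℝ × ℝ × ℝ → ℝ :=
    fun q => c (q.1, q.2.1) + q.2.2 * a (q.1, q.2.1) + q.2.2 ^ 2 * Q q with hF
  have hproj : ContDiff ℝ (⊤ : ℕ∞) (fun q : ℝ × ℝ × ℝ => ((q.1, q.2.1) : ℝ × ℝ)) :=
    contDiff_fst.prodMk (contDiff_fst.comp contDiff_snd)
  have hz : ContDiff ℝ (⊤ : ℕ∞) (fun q : ℝ × ℝ × ℝ => q.2.2) :=
    contDiff_snd.comp contDiff_snd
  have hFc : ContDiff ℝ (⊤ : ℕ∞) F := by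
    exact ((hc.comp hproj).add (hz.mul (ha.comp hproj))).add ((hz.pow 2).mul hQ)
  have hFd : DifferentiableAt ℝ F (x, y, 0) :=
    (hFc.differentiable (by simp)) _
  -- the line ι t = (x, y, t)
  have hι : HasDerivAt (fun t : ℝ => ((x, y, t) : ℝ × ℝ × ℝ)) (0, 0, 1) 0 :=
    (hasDerivAt_const 0 x).prodMk ((hasDerivAt_const 0 y).prodMk (hasDerivAt_id 0))
  have hchain : HasDerivAt (fun t : ℝ => F (x, y, t)) (fderiv ℝ F (x, y, 0) (0, 0, 1)) 0 :=
    by have := hFd.hasFDerivAt.comp_hasDerivAt 0 hι; exact this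
  -- direct computation of the same derivative
  have hg : HasDerivAt (fun t : ℝ => Q (x, y, t))
      (fderiv ℝ Q (x, y, 0) (0, 0, 1)) 0 :=
    ((hQ.differentiable (by simp)) _).hasFDerivAt.comp_hasDerivAt 0 hι
  have h1 : HasDerivAt (fun t : ℝ => c (x, y) + t * a (x, y) + t ^ 2 * Q (x, y, t))
      (a (x, y)) 0 := by
    have := ((hasDerivAt_const (0:ℝ) (c (x, y))).add
        (hasDerivAt_mul_const (a (x, y)))).add
        ((hasDerivAt_pow 2 (0:ℝ)).mul hg)
    refine this.congr_deriv ?_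
    simp
  have h2 : HasDerivAt (fun t : ℝ => F (x, y, t)) (a (x, y)) 0 := h1
  have := h2.unique hchain
  simpa [pdz] using this.symm

theorem stmt_10 (a b c d : ℝ × ℝ → ℝ) (Q₁ Q₂ : ℝ × ℝ × ℝ → ℝ)
    (ha : ContDiff ℝ (⊤ : ℕ∞) a) (hb : ContDiff ℝ (⊤ : ℕ∞) b) (hc : ContDiff ℝ (⊤ : ℕ∞) c) (hd : ContDiff ℝ (⊤ : ℕ∞) d)
    (hQ₁ : ContDiff ℝ (⊤ : ℕ∞) Q₁) (hQ₂ : ContDiff ℝ (⊤ : ℕ∞) Q₂)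
    (hjac : ∀ p : ℝ × ℝ × ℝ,
      jacobiExpr (fun q => q.2.2)
        (fun q => c (q.1, q.2.1) + q.2.2 * a (q.1, q.2.1) + q.2.2 ^ 2 * Q₁ q)
        (fun q => d (q.1, q.2.1) + q.2.2 * b (q.1, q.2.1) + q.2.2 ^ 2 * Q₂ q) p = 0) :
    ∀ q : ℝ × ℝ, c q * b q = d q * a q := by
  intro q
  obtain ⟨x, y⟩ := q
  have hJ := hjac (x, y, 0)
  have hC := pdz_shape a c Q₁ ha hc hQ₁ x y
  have hD := pdz_shape b d Q₂ hb hd hQ₂ x y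
  -- derivatives of B = z
  have hB : fderiv ℝ (fun q : ℝ × ℝ × ℝ => q.2.2) (x, y, 0) =
      (ContinuousLinearMap.snd ℝ ℝ ℝ).comp (ContinuousLinearMap.snd ℝ ℝ (ℝ × ℝ)) :=
    ((ContinuousLinearMap.snd ℝ ℝ ℝ).comp
      (ContinuousLinearMap.snd ℝ ℝ (ℝ × ℝ))).fderiv
  have hBx : pdx (fun q : ℝ × ℝ × ℝ => q.2.2) (x, y, 0) = 0 := by
    simp [pdx, hB]
  have hBy : pdy (fun q : ℝ × ℝ × ℝ => q.2.2) (x, y, 0) = 0 := by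
    simp [pdy, hB]
  rw [jacobiExpr] at hJ
  simp only [hC, hD, hBx, hBy] at hJ
  norm_num at hJ
  linarith [hJ]
end

section
/- Fix ε ∈ ℝ and consider the bivector on ℝ³ with brackets {x,y} = z, {y,z} = x·(z + ε − x² − y²), {z,x} = y·(z + ε − x² − y²). This bivector satisfies the Jacobi identity (hence is a Poisson structure), and its set of singular points equals {(0,0,0)} ∪ {(x,y,0) : x² + y² = ε}. In particular, for ε ≤ 0 the origin is the unique singular point, while for ε > 0 the singular set is the union of the origin and a circle of radius √ε in the plane z = 0. -/
/-!
Write the bivector as `(B, x g, y g)` with `B = z` and `g = z + ε - x² - y²`. A direct computation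
shows that the Jacobi expression of `(B, x g, y g)` is `B · R g - g · R B`, where `R = y ∂ₓ - x ∂_y`
generates the rotations about the `z`-axis, so it vanishes because `z` and `g` are both
rotation invariant. A singular point has `z = 0` and then either `x = y = 0` or `g = 0`.
-/

open Set

theorem fderiv_snd_fst_apply (p v : ℝ × ℝ × ℝ) :
    fderiv ℝ (fun q : ℝ × ℝ × ℝ => q.2.1) p v = v.2.1 := by
  rw [hasFDerivAt_snd.fst.fderiv]
  rfl

theorem fderiv_snd_snd_apply (p v : ℝ × ℝ × ℝ) :
    fderiv ℝ (fun q : ℝ × ℝ × ℝ => q.2.2) p v = v.2.2 := by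
  rw [hasFDerivAt_snd.snd.fderiv]
  rfl

theorem fderiv_fst_mul_apply {g : ℝ × ℝ × ℝ → ℝ} {p : ℝ × ℝ × ℝ} (hg : DifferentiableAt ℝ g p)
    (v : ℝ × ℝ × ℝ) : fderiv ℝ (fun q => q.1 * g q) p v = p.1 * fderiv ℝ g p v + v.1 * g p := by
  rw [fderiv_fun_mul differentiableAt_fst hg]
  simp [fderiv_fst, mul_comm]

theorem fderiv_snd_fst_mul_apply {g : ℝ × ℝ × ℝ → ℝ} {p : ℝ × ℝ × ℝ}
    (hg : DifferentiableAt ℝ g p) (v : ℝ × ℝ × ℝ) :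
    fderiv ℝ (fun q => q.2.1 * g q) p v = p.2.1 * fderiv ℝ g p v + v.2.1 * g p := by
  rw [fderiv_fun_mul (by fun_prop) hg]
  simp [fderiv_snd_fst_apply, mul_comm]

noncomputable def rotDeriv (F : ℝ × ℝ × ℝ → ℝ) (p : ℝ × ℝ × ℝ) : ℝ :=
  p.2.1 * pdx F p - p.1 * pdy F p

theorem jacobiExpr_fst_mul_snd_fst_mul (B : ℝ × ℝ × ℝ → ℝ) {g : ℝ × ℝ × ℝ → ℝ}
    {p : ℝ × ℝ × ℝ} (hg : DifferentiableAt ℝ g p) :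
    jacobiExpr B (fun q => q.1 * g q) (fun q => q.2.1 * g q) p =
      B p * rotDeriv g p - g p * rotDeriv B p := by
  simp only [jacobiExpr, rotDeriv, pdx, pdy, pdz, fderiv_fst_mul_apply hg,
    fderiv_snd_fst_mul_apply hg]
  ring

theorem rotDeriv_snd_snd (p : ℝ × ℝ × ℝ) : rotDeriv (fun q => q.2.2) p = 0 := by
  simp [rotDeriv, pdx, pdy, fderiv_snd_snd_apply]

theorem fderiv_snd_snd_add_sub_sq_sub_sq_apply (ε : ℝ) (p v : ℝ × ℝ × ℝ) :
    fderiv ℝ (fun q : ℝ × ℝ × ℝ => q.2.2 + ε - q.1 ^ 2 - q.2.1 ^ 2) p v =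
      v.2.2 - 2 * p.1 * v.1 - 2 * p.2.1 * v.2.1 := by
  rw [fderiv_fun_sub (by fun_prop) (by fun_prop), fderiv_fun_sub (by fun_prop) (by fun_prop),
    fderiv_add_const, fderiv_fun_pow 2 differentiableAt_fst, fderiv_fun_pow 2 (by fun_prop)]
  simp [fderiv_fst, fderiv_snd_fst_apply, fderiv_snd_snd_apply]

theorem rotDeriv_snd_snd_add_sub_sq_sub_sq (ε : ℝ) (p : ℝ × ℝ × ℝ) :
    rotDeriv (fun q => q.2.2 + ε - q.1 ^ 2 - q.2.1 ^ 2) p = 0 := by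
  simp only [rotDeriv, pdx, pdy, fderiv_snd_snd_add_sub_sq_sub_sq_apply]
  ring

theorem singular_set_eq (ε : ℝ) :
    {p : ℝ × ℝ × ℝ | p.2.2 = 0 ∧ p.1 * (p.2.2 + ε - p.1 ^ 2 - p.2.1 ^ 2) = 0 ∧
      p.2.1 * (p.2.2 + ε - p.1 ^ 2 - p.2.1 ^ 2) = 0} =
      {((0 : ℝ), (0 : ℝ), (0 : ℝ))} ∪ {p | p.2.2 = 0 ∧ p.1 ^ 2 + p.2.1 ^ 2 = ε} := by
  ext ⟨x, y, z⟩
  simp only [mem_ofPred_eq, mem_union, mem_singleton_iff, Prod.mk.injEq]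
  constructor
  · rintro ⟨rfl, hx, hy⟩
    by_cases hg : 0 + ε - x ^ 2 - y ^ 2 = 0
    · exact Or.inr ⟨rfl, by linarith⟩
    · exact Or.inl ⟨(mul_eq_zero.1 hx).resolve_right hg, (mul_eq_zero.1 hy).resolve_right hg, rfl⟩
  · rintro (⟨rfl, rfl, rfl⟩ | ⟨rfl, hr⟩)
    · simp
    · have hg : 0 + ε - x ^ 2 - y ^ 2 = 0 := by linarith
      exact ⟨rfl, by rw [hg, mul_zero], by rw [hg, mul_zero]⟩

theorem circle_subset_origin {ε : ℝ} (hε : ε ≤ 0) :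
    {p : ℝ × ℝ × ℝ | p.2.2 = 0 ∧ p.1 ^ 2 + p.2.1 ^ 2 = ε} ⊆ {((0 : ℝ), (0 : ℝ), (0 : ℝ))} := by
  rintro ⟨x, y, z⟩ ⟨hz, hr⟩
  have hx : x = 0 := by nlinarith [sq_nonneg x, sq_nonneg y]
  have hy : y = 0 := by nlinarith [sq_nonneg x, sq_nonneg y]
  simp_all

theorem stmt_18 (ε : ℝ) (B C D : ℝ × ℝ × ℝ → ℝ)
    (hB : B = fun p => p.2.2)
    (hC : C = fun p => p.1 * (p.2.2 + ε - p.1 ^ 2 - p.2.1 ^ 2))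
    (hD : D = fun p => p.2.1 * (p.2.2 + ε - p.1 ^ 2 - p.2.1 ^ 2))
    (S : Set (ℝ × ℝ × ℝ)) (hS : S = {p | B p = 0 ∧ C p = 0 ∧ D p = 0}) :
    (∀ p : ℝ × ℝ × ℝ, jacobiExpr B C D p = 0) ∧
    S = {((0 : ℝ), (0 : ℝ), (0 : ℝ))} ∪ {p | p.2.2 = 0 ∧ p.1 ^ 2 + p.2.1 ^ 2 = ε} ∧
    (ε ≤ 0 → S = {((0 : ℝ), (0 : ℝ), (0 : ℝ))}) ∧
    (0 < ε → S = {((0 : ℝ), (0 : ℝ), (0 : ℝ))} ∪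
      {p | p.2.2 = 0 ∧ p.1 ^ 2 + p.2.1 ^ 2 = Real.sqrt ε ^ 2}) := by
  subst hB hC hD hS
  refine ⟨fun p => ?_, singular_set_eq ε, fun hε => ?_, fun hε => ?_⟩
  · rw [jacobiExpr_fst_mul_snd_fst_mul _ (by fun_prop), rotDeriv_snd_snd,
      rotDeriv_snd_snd_add_sub_sq_sub_sq, mul_zero, mul_zero, sub_zero]
  · rw [singular_set_eq, union_eq_left.2 (circle_subset_origin hε)]
  · rw [Real.sq_sqrt hε.le, singular_set_eq]
end
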